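/- Let p be an integer-valued supermodular set-function on the subsets of a nonempty finite set S with p(∅) = 0, and assume Ḃ(p) is nonempty. Then there exist a matroid M on ground set S and a vector Δ : S → ℤ such that the set of decreasingly minimal elements of Ḃ(p) equals { χ_L + Δ : L is a base of M }; that is, m ∈ Ḃ(p) is decreasingly minimal if and only if m = χ_L + Δ for some base L of M. -/

import Mathlib

open Finset

variable {α : Type*}

/-- Integer-valued supermodular set-function. -/
def Supermodular [DecidableEq α] (p : Finset α → ℤ) : Prop :=
  ∀ X Y : Finset α, p X + p Y ≤ p (X ∩ Y) + p (X ∪ Y)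

/-- The M-convex set `Ḃ(p)` of integral elements of the base-polyhedron `B'(p)`:
all `m : α → ℤ` with `m̃(X) ≥ p(X)` for every `X` and `m̃(S) = p(S)`. -/
def Bdot [Fintype α] (p : Finset α → ℤ) : Set (α → ℤ) :=
  {m | (∀ X : Finset α, p X ≤ ∑ s ∈ X, m s) ∧ (∑ s, m s) = p Finset.univ}

/-- `x↓`: the values of `x` arranged in nonincreasing order. -/
def sortedDesc [Fintype α] (x : α → ℤ) : List ℤ :=
  ((Finset.univ.val.map x).sort (· ≤ ·)).reverse

/-- `x↑`: the values of `x` arranged in nondecreasing order. -/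
def sortedAsc [Fintype α] (x : α → ℤ) : List ℤ :=
  (Finset.univ.val.map x).sort (· ≤ ·)

/-- `x ≤_dec y`: `x↓` is lexicographically less than or equal to `y↓`. -/
def DecLE [Fintype α] (x y : α → ℤ) : Prop :=
  sortedDesc x = sortedDesc y ∨ List.Lex (· < ·) (sortedDesc x) (sortedDesc y)

/-- `x ≤_inc y`: `x↑` is lexicographically less than or equal to `y↑`. -/
def IncLE [Fintype α] (x y : α → ℤ) : Prop :=
  sortedAsc x = sortedAsc y ∨ List.Lex (· < ·) (sortedAsc x) (sortedAsc y)

/-- `m` is a decreasingly minimal element of `Bdot p`. -/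
def DecMin [Fintype α] (p : Finset α → ℤ) (m : α → ℤ) : Prop :=
  m ∈ Bdot p ∧ ∀ y ∈ Bdot p, DecLE m y
/-!
Two facts drive the proof. First, `Ḃ(p)` satisfies the simultaneous exchange axiom of
M-convex sets: if `m'(s) < m(s)`, there is a `t` with `m(t) < m'(t)` such that both
`m - χ_s + χ_t` and `m' - χ_t + χ_s` lie in `Ḃ(p)`. Such a `t` is found in the smallest
`m`-tight set containing `s`, since otherwise the union of the smallest `m'`-tight sets of
the candidates would violate supermodularity. Second, moving a unit from `s` to `t`
strictly decreases `m↓` when `m(s) ≥ m(t) + 2` and leaves it unchanged when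
`m(s) = m(t) + 1`. For two dec-min elements these force `m(s) - m'(s) ∈ {-1, 0, 1}`, so
all dec-min elements lie between some `Δ` and `Δ + 1`, and the exchange axiom becomes
the base exchange axiom for the sets `{s | m(s) = Δ(s) + 1}`.
-/

theorem List.lex_lt_of_count_lt {β : Type*} [LinearOrder β] {c : β} :
    ∀ {u v : List β}, u.Pairwise (· ≥ ·) → v.Pairwise (· ≥ ·) → v.count c < u.count c →
      (∀ w, c < w → u.count w = v.count w) → List.Lex (· < ·) v u
  | [], _, _, _, hc, _ => by simp at hc
  | _ :: _, [], _, _, _, _ => .nil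
  | a :: u, b :: v, hu, hv, hc, habove => by
    rw [List.pairwise_cons] at hu hv
    have le_head : ∀ x ∈ a :: u, x ≤ a := by
      simpa only [List.mem_cons, forall_eq_or_imp] using ⟨le_rfl, hu.1⟩
    have hca : c ≤ a := le_head c (List.count_pos_iff.1 (by omega))
    rcases lt_trichotomy b a with hba | rfl | hab
    · exact .rel hba
    · refine .cons (lex_lt_of_count_lt (c := c) hu.2 hv.2 ?_ fun w hw => ?_)
      · simpa [List.count_cons] using hc
      · simpa [List.count_cons] using habove w hw
    · have hb : 0 < (a :: u).count b := by
        rw [habove b (hca.trans_lt hab)]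
        exact List.count_pos_iff.2 List.mem_cons_self
      exact absurd (le_head b (List.count_pos_iff.1 hb)) (not_le.2 hab)

section SortedDesc

variable [Fintype α]

lemma pairwise_sortedDesc (x : α → ℤ) : (sortedDesc x).Pairwise (· ≥ ·) :=
  List.pairwise_reverse.2 (Multiset.pairwise_sort _ _)

lemma count_sortedDesc (x : α → ℤ) (w : ℤ) :
    (sortedDesc x).count w = (univ.val.map x).count w := by
  rw [sortedDesc, List.count_reverse, ← Multiset.coe_count, Multiset.sort_eq]

lemma sortedDesc_eq_of_map_eq {x y : α → ℤ} (h : univ.val.map x = univ.val.map y) :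
    sortedDesc x = sortedDesc y := by
  rw [sortedDesc, sortedDesc, h]

lemma decLE_iff (x y : α → ℤ) : DecLE x y ↔ sortedDesc x ≤ sortedDesc y :=
  le_iff_lt_or_eq.trans or_comm |>.symm

end SortedDesc

section Transfer

variable [DecidableEq α]

def transfer (x : α → ℤ) (s t : α) : α → ℤ :=
  x - Pi.single s 1 + Pi.single t 1

lemma transfer_apply (x : α → ℤ) (s t i : α) :
    transfer x s t i = x i - (if i = s then 1 else 0) + (if i = t then 1 else 0) := by
  simp [transfer, Pi.single_apply]

lemma sum_transfer (x : α → ℤ) (s t : α) (X : Finset α) :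
    ∑ i ∈ X, transfer x s t i
      = ∑ i ∈ X, x i - (if s ∈ X then 1 else 0) + (if t ∈ X then 1 else 0) := by
  simp [transfer, sum_add_distrib, sum_sub_distrib]

variable [Fintype α]

lemma map_transfer_add {x : α → ℤ} {s t : α} (hst : s ≠ t) :
    univ.val.map (transfer x s t) + {x s, x t} = univ.val.map x + {x s - 1, x t + 1} := by
  have huniv : (univ : Finset α).val = s ::ₘ t ::ₘ ((univ.erase s).erase t).val := by
    rw [← insert_val_of_notMem (by simp), ← insert_val_of_notMem (by simp [hst]),
      insert_erase (mem_erase.2 ⟨hst.symm, mem_univ t⟩), insert_erase (mem_univ s)]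
  have hrest : ((univ.erase s).erase t).val.map (transfer x s t)
      = ((univ.erase s).erase t).val.map x :=
    Multiset.map_congr rfl fun i hi => by
      rw [Finset.mem_val] at hi
      obtain ⟨hit, his⟩ := by simpa using hi
      simp [transfer_apply, his, hit]
  rw [huniv, Multiset.map_cons, Multiset.map_cons, Multiset.map_cons, Multiset.map_cons, hrest]
  simp only [transfer_apply, if_pos, if_neg hst, if_neg hst.symm, add_zero, sub_zero]
  simp only [Multiset.insert_eq_cons, ← Multiset.singleton_add]
  abel

lemma sortedDesc_transfer_of_eq {x : α → ℤ} {s t : α} (h : x s = x t + 1) :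
    sortedDesc (transfer x s t) = sortedDesc x := by
  have hst : s ≠ t := by rintro rfl; omega
  apply sortedDesc_eq_of_map_eq
  have key := map_transfer_add (x := x) hst
  rw [show x s - 1 = x t by omega, show x t + 1 = x s by omega, Multiset.pair_comm] at key
  exact add_right_cancel key

lemma sortedDesc_transfer_lt {x : α → ℤ} {s t : α} (h : x t + 2 ≤ x s) :
    sortedDesc (transfer x s t) < sortedDesc x := by
  have hst : s ≠ t := by rintro rfl; omega
  have hcount (w : ℤ) := congrArg (Multiset.count w) (map_transfer_add (x := x) hst)
  simp only [Multiset.count_add, Multiset.insert_eq_cons, Multiset.count_cons,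
    Multiset.count_singleton, ← count_sortedDesc] at hcount
  refine List.lex_lt_of_count_lt (c := x s) (pairwise_sortedDesc _) (pairwise_sortedDesc _) ?_
    fun w hw => ?_
  · have := hcount (x s)
    split_ifs at this <;> omega
  · have := hcount w
    split_ifs at this <;> omega

end Transfer

section Tight

variable [Fintype α] [DecidableEq α] {p : Finset α → ℤ} {m m' : α → ℤ} {X Y : Finset α}

def IsTight (p : Finset α → ℤ) (m : α → ℤ) (X : Finset α) : Prop :=
  ∑ i ∈ X, m i = p X

lemma IsTight.inter_union (hp : Supermodular p) (hm : m ∈ Bdot p) (hX : IsTight p m X)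
    (hY : IsTight p m Y) : IsTight p m (X ∩ Y) ∧ IsTight p m (X ∪ Y) := by
  have := sum_union_inter (s₁ := X) (s₂ := Y) (f := m)
  have := hm.1 (X ∪ Y)
  have := hm.1 (X ∩ Y)
  have := hp X Y
  unfold IsTight at *
  omega

lemma isTight_sup {ι : Type*} (hp : Supermodular p) (h0 : p ∅ = 0) (hm : m ∈ Bdot p)
    {C : Finset ι} {f : ι → Finset α} (hf : ∀ i ∈ C, IsTight p m (f i)) :
    IsTight p m (C.sup f) :=
  sup_induction (p := IsTight p m) (by simp [IsTight, h0])
    (fun _ hX _ hY => (hX.inter_union hp hm hY).2) hf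

open Classical in
noncomputable def minTight (p : Finset α → ℤ) (m : α → ℤ) (s : α) : Finset α :=
  ((univ : Finset (Finset α)).filter fun X => s ∈ X ∧ IsTight p m X).inf id

lemma minTight_subset {s : α} (hs : s ∈ X) (hX : IsTight p m X) : minTight p m s ⊆ X :=
  inf_le (f := id) (by simp [hs, hX])

lemma mem_minTight_and_isTight (hp : Supermodular p) (hm : m ∈ Bdot p) (s : α) :
    s ∈ minTight p m s ∧ IsTight p m (minTight p m s) :=
  inf_induction (p := fun X => s ∈ X ∧ IsTight p m X) (by simpa [IsTight] using hm.2)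
    (fun _ hX _ hY => ⟨mem_inter.2 ⟨hX.1, hY.1⟩, (hX.2.inter_union hp hm hY.2).1⟩) (by simp)

lemma transfer_mem_bdot {s t : α} (hm : m ∈ Bdot p) (ht : t ∈ minTight p m s) :
    transfer m s t ∈ Bdot p := by
  refine ⟨fun X => ?_, by simp [sum_transfer, hm.2]⟩
  rw [sum_transfer]
  by_cases hsX : s ∈ X <;> by_cases htX : t ∈ X
  · simpa [hsX, htX] using hm.1 X
  · -- `X` separates `s` from `t ∈ minTight p m s`, so it is not tight
    have hlt : p X < ∑ i ∈ X, m i :=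
      (hm.1 X).lt_of_ne fun hX => htX (minTight_subset hsX hX.symm ht)
    simp only [hsX, htX, if_true, if_false]
    omega
  · simp only [hsX, htX, if_true, if_false]
    linarith [hm.1 X]
  · simpa [hsX, htX] using hm.1 X

lemma sum_sdiff_le_of_isTight (hp : Supermodular p) (hm : m ∈ Bdot p) (hm' : m' ∈ Bdot p)
    (hX : IsTight p m X) (hY : IsTight p m' Y) : ∑ i ∈ X \ Y, m i ≤ ∑ i ∈ X \ Y, m' i := by
  have hm'XY := sum_sdiff (f := m') (subset_union_right (s₁ := X) (s₂ := Y))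
  rw [union_sdiff_right] at hm'XY
  have hmX := sum_inter_add_sum_sdiff X Y m
  have := hm'.1 (X ∪ Y)
  have := hm.1 (X ∩ Y)
  have := hp X Y
  unfold IsTight at hX hY
  omega

lemma exists_exchange_partner (hp : Supermodular p) (h0 : p ∅ = 0) (hm : m ∈ Bdot p)
    (hm' : m' ∈ Bdot p) {s : α} (hs : m' s < m s) :
    ∃ t ∈ minTight p m s, m t < m' t ∧ s ∈ minTight p m' t := by
  by_contra! h
  set X := minTight p m s
  set Z := (X.filter fun t => m t < m' t).sup (minTight p m')
  have hsZ : s ∉ Z := by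
    simp only [Z, mem_sup, mem_filter]
    rintro ⟨t, ⟨htX, hlt⟩, hst⟩
    exact h t htX hlt hst
  have hle : ∀ i ∈ X \ Z, m' i ≤ m i := fun i hi => by
    by_contra! hlt
    exact (mem_sdiff.1 hi).2 <| mem_sup.2
      ⟨i, mem_filter.2 ⟨(mem_sdiff.1 hi).1, hlt⟩, (mem_minTight_and_isTight hp hm' i).1⟩
  have hZ : IsTight p m' Z :=
    isTight_sup hp h0 hm' fun t _ => (mem_minTight_and_isTight hp hm' t).2
  have hlt : ∑ i ∈ X \ Z, m' i < ∑ i ∈ X \ Z, m i :=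
    sum_lt_sum hle ⟨s, mem_sdiff.2 ⟨(mem_minTight_and_isTight hp hm s).1, hsZ⟩, hs⟩
  exact hlt.not_ge
    (sum_sdiff_le_of_isTight hp hm hm' (mem_minTight_and_isTight hp hm s).2 hZ)

lemma exists_transfer_mem_bdot (hp : Supermodular p) (h0 : p ∅ = 0) (hm : m ∈ Bdot p)
    (hm' : m' ∈ Bdot p) {s : α} (hs : m' s < m s) :
    ∃ t, m t < m' t ∧ transfer m s t ∈ Bdot p ∧ transfer m' t s ∈ Bdot p :=
  let ⟨t, htX, hlt, hsY⟩ := exists_exchange_partner hp h0 hm hm' hs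
  ⟨t, hlt, transfer_mem_bdot hm htX, transfer_mem_bdot hm' hsY⟩

end Tight

section DecMin

variable [Fintype α] {p : Finset α → ℤ} {m m' : α → ℤ}

lemma bdot_finite (p : Finset α → ℤ) : (Bdot p).Finite := by
  classical
  refine (Set.finite_Icc (fun i => p {i}) fun i => p univ - ∑ j ∈ univ.erase i, p {j}).subset
    fun m hm => ⟨fun i => by simpa using hm.1 {i}, fun i => ?_⟩
  have hsplit := add_sum_erase univ m (mem_univ i)
  have hlow : ∑ j ∈ univ.erase i, p {j} ≤ ∑ j ∈ univ.erase i, m j :=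
    sum_le_sum fun j _ => by simpa using hm.1 {j}
  have := hm.2
  dsimp only
  omega

lemma exists_decMin (hne : (Bdot p).Nonempty) : ∃ m, DecMin p m :=
  let ⟨m, hm, hmin⟩ := Set.exists_min_image _ sortedDesc (bdot_finite p) hne
  ⟨m, hm, fun y hy => (decLE_iff m y).2 (hmin y hy)⟩

variable [DecidableEq α]

lemma DecMin.apply_le_apply_add_one (hm : DecMin p m) {s t : α}
    (h : transfer m s t ∈ Bdot p) : m s ≤ m t + 1 := by
  by_contra! hlt
  exact (sortedDesc_transfer_lt (by omega)).not_ge ((decLE_iff _ _).1 (hm.2 _ h))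

lemma DecMin.transfer_of_eq_add_one {s t : α} (hm : DecMin p m) (h : transfer m s t ∈ Bdot p)
    (hst : m s = m t + 1) : DecMin p (transfer m s t) :=
  ⟨h, fun y hy => (decLE_iff _ _).2 <|
    (sortedDesc_transfer_of_eq hst).symm ▸ (decLE_iff _ _).1 (hm.2 y hy)⟩

lemma DecMin.exchange (hp : Supermodular p) (h0 : p ∅ = 0) (hm : DecMin p m)
    (hm' : DecMin p m') {s : α} (hs : m' s < m s) :
    m s = m' s + 1 ∧ ∃ t, m t + 1 = m s ∧ m' t = m s ∧ DecMin p (transfer m s t) := by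
  obtain ⟨t, hlt, hmt, hm't⟩ := exists_transfer_mem_bdot hp h0 hm.1 hm'.1 hs
  have h₁ := hm.apply_le_apply_add_one hmt
  have h₂ := hm'.apply_le_apply_add_one hm't
  exact ⟨by omega, t, by omega, by omega, hm.transfer_of_eq_add_one hmt (by omega)⟩

lemma exists_forall_decMin_mem_Icc (hp : Supermodular p) (h0 : p ∅ = 0)
    (hne : (Bdot p).Nonempty) :
    ∃ Δ : α → ℤ, ∀ m, DecMin p m → ∀ s, m s ∈ Set.Icc (Δ s) (Δ s + 1) := by
  have hfin : {m | DecMin p m}.Finite := (bdot_finite p).subset fun _ hm => hm.1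
  choose μ hμ hmin using fun s =>
    Set.exists_min_image _ (fun m => m s) hfin (exists_decMin hne)
  refine ⟨fun s => μ s s, fun m hm s => ⟨hmin s m hm, ?_⟩⟩
  by_contra! h
  have := (hm.exchange hp h0 (hμ s) (s := s) (by omega)).1
  omega

end DecMin

section Matroid

variable [DecidableEq α] {Δ : α → ℤ}

lemma setOf_transfer_eq_insert_diff {m : α → ℤ} {a t : α} (ha : m a = Δ a + 1)
    (ht : m t = Δ t) :
    {i | transfer m a t i = Δ i + 1} = insert t ({i | m i = Δ i + 1} \ {a}) := by
  have hat : a ≠ t := by rintro rfl; omega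
  ext i
  by_cases hit : i = t
  · subst hit
    simpa [transfer_apply, hat.symm] using ht
  by_cases hia : i = a
  · subst hia
    simp [transfer_apply, hat, ha]
  · simp [transfer_apply, hit, hia]

lemma eq_ite_add_iff {m : α → ℤ} (h : ∀ s, m s ∈ Set.Icc (Δ s) (Δ s + 1)) (L : Finset α) :
    (m = fun s => (if s ∈ L then 1 else 0) + Δ s) ↔ (↑L : Set α) = {s | m s = Δ s + 1} := by
  constructor
  · rintro rfl
    ext s
    by_cases hs : s ∈ L <;> simp [hs, add_comm]
  · intro hL
    funext s
    have hs : s ∈ L ↔ m s = Δ s + 1 := by rw [← mem_coe, hL, Set.mem_ofPred_eq]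
    have := h s
    split_ifs with hsL
    · linarith [hs.1 hsL]
    · have := mt hs.2 hsL
      simp only [Set.mem_Icc] at *
      omega

variable [Fintype α] {p : Finset α → ℤ}

lemma decMin_isBase_exchange (hp : Supermodular p) (h0 : p ∅ = 0)
    (hΔ : ∀ m, DecMin p m → ∀ s, m s ∈ Set.Icc (Δ s) (Δ s + 1)) :
    Matroid.ExchangeProperty fun B => ∃ m, DecMin p m ∧ B = {s | m s = Δ s + 1} := by
  rintro _ _ ⟨m₁, hm₁, rfl⟩ ⟨m₂, hm₂, rfl⟩ a ⟨ha₁, ha₂⟩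
  simp only [Set.mem_ofPred_eq] at ha₁ ha₂
  obtain ⟨ha₂', ha₂''⟩ := hΔ m₂ hm₂ a
  obtain ⟨-, t, ht₁, ht₂, hm₃⟩ := hm₁.exchange hp h0 hm₂ (s := a) (by omega)
  obtain ⟨ht₁', -⟩ := hΔ m₁ hm₁ t
  obtain ⟨-, ht₂'⟩ := hΔ m₂ hm₂ t
  have hm₁t : m₁ t = Δ t := by omega
  exact ⟨t, ⟨by simp only [Set.mem_ofPred_eq]; omega, by simp only [Set.mem_ofPred_eq]; omega⟩,
    _, hm₃, (setOf_transfer_eq_insert_diff ha₁ hm₁t).symm⟩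

end Matroid

theorem stmt10_general [Fintype α] [DecidableEq α]
    (p : Finset α → ℤ) (hp : Supermodular p) (h0 : p ∅ = 0)
    (hne : (Bdot p).Nonempty) :
    ∃ (M : Matroid α) (Δ : α → ℤ), M.E = Set.univ ∧
      ∀ m : α → ℤ, DecMin p m ↔
        ∃ L : Finset α, M.IsBase ↑L ∧
          m = fun s => (if s ∈ L then 1 else 0) + Δ s := by
  obtain ⟨Δ, hΔ⟩ := exists_forall_decMin_mem_Icc hp h0 hne
  obtain ⟨m₀, hm₀⟩ := exists_decMin hne
  let M := Matroid.ofIsBaseOfFinite Set.finite_univ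
    (fun B => ∃ m, DecMin p m ∧ B = {s | m s = Δ s + 1}) ⟨_, m₀, hm₀, rfl⟩
    (decMin_isBase_exchange hp h0 hΔ) fun _ _ => Set.subset_univ _
  refine ⟨M, Δ, rfl, fun m => ⟨fun hm => ?_, ?_⟩⟩
  · exact ⟨univ.filter fun s => m s = Δ s + 1, ⟨m, hm, by simp⟩,
      (eq_ite_add_iff (hΔ m hm) _).2 (by simp)⟩
  · rintro ⟨L, ⟨m', hm', hL⟩, rfl⟩
    rwa [← (eq_ite_add_iff (hΔ m' hm') L).2 hL]

/-- The set of dec-min elements of `Ḃ(p)` is a matroidal M-convex set: there are a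
matroid `M` on `S` and an integral vector `Δ` such that the dec-min elements are
exactly the vectors `χ_L + Δ` where `L` is a base of `M`. -/
theorem stmt10 [Fintype α] [DecidableEq α] [Nonempty α]
    (p : Finset α → ℤ) (hp : Supermodular p) (h0 : p ∅ = 0)
    (hne : (Bdot p).Nonempty) :
    ∃ (M : Matroid α) (Δ : α → ℤ), M.E = Set.univ ∧
      ∀ m : α → ℤ, DecMin p m ↔
        ∃ L : Finset α, M.IsBase ↑L ∧
          m = fun s => (if s ∈ L then 1 else 0) + Δ s :=
  stmt10_general p hp h0 hne
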